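/- arXiv:2005.01402 — 5 statements merged into one kernel-verified Lean document; each statement's English description precedes it below -/
import Mathlib

section
/- In the network model (P1), the optimal-cost function C* is continuous on [0, ∞). -/
open Finset Filter

/-- Feasibility for the network model (P1) at total storage capacity `E`:
(i) nodal power balance with storage action `u`, (ii) line limits,
(iii) state-of-charge constraints with `x_{n,0} = e n / 2`, `0 ≤ x ≤ e n`,
`x_{n,T} = e n / 2`, and (iv) total capacity budget `∑ n, e n ≤ E`. -/
def netFeasible (N T : ℕ) (Y fmax : Fin N → Fin N → ℝ) (d : Fin N → Fin T → ℝ)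
    (E : ℝ) (g u θ : Fin N → Fin T → ℝ) (e : Fin N → ℝ) : Prop :=
  (∀ n, 0 ≤ e n) ∧
  (∀ n t, g n t - u n t - d n t = ∑ m, Y n m * (θ n t - θ m t)) ∧
  (∀ n m t, Y n m * (θ n t - θ m t) ≤ fmax n m) ∧
  (∀ n, ∀ k : Fin T, 0 ≤ e n / 2 + ∑ t ∈ Finset.Iic k, u n t) ∧
  (∀ n, ∀ k : Fin T, e n / 2 + ∑ t ∈ Finset.Iic k, u n t ≤ e n) ∧
  (∀ n, e n / 2 + ∑ t, u n t = e n / 2) ∧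
  (∑ n, e n ≤ E)

/-- Total generation cost `∑ n ∑ t C_n (g n t)` with quadratic costs. -/
noncomputable def netCost (N T : ℕ) (a b c : Fin N → ℝ) (g : Fin N → Fin T → ℝ) : ℝ :=
  ∑ n, ∑ t, ((1 / 2) * a n * (g n t) ^ 2 + b n * g n t + c n)

/-- Optimal cost `C*(E)` of the network model (P1). -/
noncomputable def netCstar (N T : ℕ) (Y fmax : Fin N → Fin N → ℝ)
    (d : Fin N → Fin T → ℝ) (a b c : Fin N → ℝ) (E : ℝ) : ℝ :=
  sInf {y : ℝ | ∃ g u θ : Fin N → Fin T → ℝ, ∃ e : Fin N → ℝ,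
    netFeasible N T Y fmax d E g u θ e ∧ y = netCost N T a b c g}

/-! ### Auxiliary definitions -/

/-- The feasible-cost set. -/
def netSet (N T : ℕ) (Y fmax : Fin N → Fin N → ℝ) (d : Fin N → Fin T → ℝ)
    (a b c : Fin N → ℝ) (E : ℝ) : Set ℝ :=
  {y : ℝ | ∃ g u θ : Fin N → Fin T → ℝ, ∃ e : Fin N → ℝ,
    netFeasible N T Y fmax d E g u θ e ∧ y = netCost N T a b c g}

/-- Lower bound for the cost. -/
noncomputable def netLb (N T : ℕ) (a b c : Fin N → ℝ) : ℝ :=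
  ∑ n : Fin N, ∑ _t : Fin T, (c n - b n ^ 2 / (2 * a n))

/-- Cost of the trivial feasible point `g = d`. -/
noncomputable def netCd (N T : ℕ) (d : Fin N → Fin T → ℝ) (a b c : Fin N → ℝ) : ℝ :=
  netCost N T a b c d

/-- Uniform bound for near-optimal generations. -/
noncomputable def netG (N T : ℕ) (d : Fin N → Fin T → ℝ) (a b c : Fin N → ℝ) (n : Fin N) : ℝ :=
  Real.sqrt (2 * (netCd N T d a b c + 1 - netLb N T a b c) / a n) + |b n| / a n

/-- Lipschitz-type constant. -/
noncomputable def netK (N T : ℕ) (d : Fin N → Fin T → ℝ) (a b c : Fin N → ℝ) : ℝ :=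
  ∑ n : Fin N, ∑ _t : Fin T, (a n / 2 + a n * netG N T d a b c n + |b n|)

section aux
variable {N T : ℕ} {Y fmax : Fin N → Fin N → ℝ} {d : Fin N → Fin T → ℝ} {a b c : Fin N → ℝ}

private lemma term_lb (ha : ∀ n, 0 < a n) (n : Fin N) (x : ℝ) :
    c n - b n ^ 2 / (2 * a n) ≤ (1 / 2) * a n * x ^ 2 + b n * x + c n := by
  have h2a : 0 < 2 * a n := by linarith [ha n]
  have hdiv : b n ^ 2 / (2 * a n) * (2 * a n) = b n ^ 2 :=
    div_mul_cancel₀ _ (ne_of_gt h2a)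
  nlinarith [sq_nonneg (a n * x + b n), ha n]

private lemma cost_lb (ha : ∀ n, 0 < a n) (g : Fin N → Fin T → ℝ) :
    netLb N T a b c ≤ netCost N T a b c g := by
  refine Finset.sum_le_sum fun n _ => Finset.sum_le_sum fun t _ => term_lb ha n (g n t)

private lemma abs_u_le (u : Fin T → ℝ) (en : ℝ)
    (h1 : ∀ k : Fin T, 0 ≤ en / 2 + ∑ t ∈ Finset.Iic k, u t)
    (h2 : ∀ k : Fin T, en / 2 + ∑ t ∈ Finset.Iic k, u t ≤ en)
    (k : Fin T) : |u k| ≤ en := by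
  have hen : 0 ≤ en := le_trans (h1 k) (h2 k)
  have hsplit : ∑ t ∈ Finset.Iic k, u t = u k + ∑ t ∈ Finset.Iio k, u t := by
    rw [← Finset.Iio_insert, Finset.sum_insert (by simp)]
  have hprev : -(en / 2) ≤ ∑ t ∈ Finset.Iio k, u t ∧ ∑ t ∈ Finset.Iio k, u t ≤ en / 2 := by
    rcases Nat.eq_zero_or_pos k.val with hk | hk
    · have hIio : Finset.Iio k = ∅ := by
        ext t; simp only [Finset.mem_Iio, Finset.notMem_empty, iff_false, not_lt, Fin.le_def,
          Fin.lt_def]; omega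
      rw [hIio]; simp only [Finset.sum_empty]; constructor <;> linarith
    · have hj : k.val - 1 < T := lt_of_le_of_lt (Nat.sub_le _ _) k.isLt
      have hIio : Finset.Iio k = Finset.Iic ⟨k.val - 1, hj⟩ := by
        ext t; simp only [Finset.mem_Iio, Finset.mem_Iic, Fin.le_def, Fin.lt_def]; omega
      rw [hIio]
      exact ⟨by linarith [h1 ⟨k.val - 1, hj⟩], by linarith [h2 ⟨k.val - 1, hj⟩]⟩
  have hb1 := h1 k; have hb2 := h2 k
  rw [hsplit] at hb1 hb2
  rw [abs_le]
  exact ⟨by linarith [hprev.1, hprev.2], by linarith [hprev.1, hprev.2]⟩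

private lemma trivial_mem (hfmax : ∀ n m, 0 < fmax n m) {E : ℝ} (hE : 0 ≤ E) :
    netCd N T d a b c ∈ netSet N T Y fmax d a b c E := by
  refine ⟨d, 0, 0, 0, ⟨fun n => le_refl 0, ?_, ?_, ?_, ?_, ?_, ?_⟩, rfl⟩
  · intro n t; simp
  · intro n m t; simpa using (hfmax n m).le
  · intro n k; simp
  · intro n k; simp
  · intro n; simp
  · simpa using hE

private lemma netSet_nonempty (hfmax : ∀ n m, 0 < fmax n m) {E : ℝ} (hE : 0 ≤ E) :
    (netSet N T Y fmax d a b c E).Nonempty :=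
  ⟨_, trivial_mem hfmax hE⟩

private lemma netSet_bddBelow (ha : ∀ n, 0 < a n) (E : ℝ) :
    BddBelow (netSet N T Y fmax d a b c E) := by
  refine ⟨netLb N T a b c, fun y hy => ?_⟩
  obtain ⟨g, u, θ, e, _, rfl⟩ := hy
  exact cost_lb ha g

private lemma cstar_antitone (ha : ∀ n, 0 < a n) (hfmax : ∀ n m, 0 < fmax n m)
    {E₁ E₂ : ℝ} (hE₁ : 0 ≤ E₁) (h : E₁ ≤ E₂) :
    netCstar N T Y fmax d a b c E₂ ≤ netCstar N T Y fmax d a b c E₁ := by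
  refine csInf_le_csInf (netSet_bddBelow ha E₂) (netSet_nonempty hfmax hE₁) ?_
  rintro y ⟨g, u, θ, e, hf, rfl⟩
  exact ⟨g, u, θ, e, ⟨hf.1, hf.2.1, hf.2.2.1, hf.2.2.2.1, hf.2.2.2.2.1, hf.2.2.2.2.2.1,
    le_trans hf.2.2.2.2.2.2 h⟩, rfl⟩

private lemma cstar_le_Cd (ha : ∀ n, 0 < a n) (hfmax : ∀ n m, 0 < fmax n m)
    {E : ℝ} (hE : 0 ≤ E) :
    netCstar N T Y fmax d a b c E ≤ netCd N T d a b c :=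
  csInf_le (netSet_bddBelow ha E) (trivial_mem hfmax hE)

private lemma netG_nonneg (ha : ∀ n, 0 < a n) (n : Fin N) : 0 ≤ netG N T d a b c n :=
  add_nonneg (Real.sqrt_nonneg _) (div_nonneg (abs_nonneg _) (ha n).le)

private lemma netK_nonneg (ha : ∀ n, 0 < a n) : 0 ≤ netK N T d a b c := by
  refine Finset.sum_nonneg fun n _ => Finset.sum_nonneg fun t _ => ?_
  have := ha n
  have := netG_nonneg (N := N) (T := T) (d := d) (a := a) (b := b) (c := c) ha n
  positivity

/-- Bound on `g` from a cost bound. -/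
private lemma g_bound (ha : ∀ n, 0 < a n) (g : Fin N → Fin T → ℝ)
    (hcost : netCost N T a b c g ≤ netCd N T d a b c + 1) (n : Fin N) (t : Fin T) :
    |g n t| ≤ netG N T d a b c n := by
  set B : ℝ := netCd N T d a b c + 1 - netLb N T a b c with hB
  -- the single term is at most its minimum plus B
  have hterm : (1 / 2) * a n * (g n t) ^ 2 + b n * g n t + c n
      - (c n - b n ^ 2 / (2 * a n)) ≤ B := by
    have h1 : ∀ m : Fin N, (0:ℝ) ≤ ∑ s : Fin T,
        ((1 / 2) * a m * (g m s) ^ 2 + b m * g m s + c m - (c m - b m ^ 2 / (2 * a m))) :=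
      fun m => Finset.sum_nonneg fun s _ => sub_nonneg.mpr (term_lb ha m (g m s))
    have h2 : (1 / 2) * a n * (g n t) ^ 2 + b n * g n t + c n - (c n - b n ^ 2 / (2 * a n))
        ≤ ∑ m : Fin N, ∑ s : Fin T,
          ((1 / 2) * a m * (g m s) ^ 2 + b m * g m s + c m - (c m - b m ^ 2 / (2 * a m))) := by
      calc (1 / 2) * a n * (g n t) ^ 2 + b n * g n t + c n - (c n - b n ^ 2 / (2 * a n))
          ≤ ∑ s : Fin T, ((1 / 2) * a n * (g n s) ^ 2 + b n * g n s + c n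
              - (c n - b n ^ 2 / (2 * a n))) :=
            Finset.single_le_sum (f := fun s => (1 / 2) * a n * (g n s) ^ 2 + b n * g n s + c n
              - (c n - b n ^ 2 / (2 * a n)))
              (fun s _ => sub_nonneg.mpr (term_lb ha n (g n s))) (Finset.mem_univ t)
        _ ≤ _ := Finset.single_le_sum (f := fun m => ∑ s : Fin T,
              ((1 / 2) * a m * (g m s) ^ 2 + b m * g m s + c m - (c m - b m ^ 2 / (2 * a m))))
              (fun m _ => h1 m) (Finset.mem_univ n)
    have h3 : ∑ m : Fin N, ∑ s : Fin T,
        ((1 / 2) * a m * (g m s) ^ 2 + b m * g m s + c m - (c m - b m ^ 2 / (2 * a m)))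
        = netCost N T a b c g - netLb N T a b c := by
      rw [netCost, netLb, ← Finset.sum_sub_distrib]
      refine Finset.sum_congr rfl fun m _ => ?_
      rw [← Finset.sum_sub_distrib]
    rw [h3] at h2
    linarith
  have hBpos : 0 < B := by
    have h0 := cost_lb (c := c) (b := b) ha d
    rw [hB]
    have : netLb N T a b c ≤ netCd N T d a b c := h0
    linarith
  have hane : a n ≠ 0 := (ha n).ne'
  have hsq : (g n t + b n / a n) ^ 2 ≤ 2 * B / a n := by
    have hexp : (a n / 2) * (g n t + b n / a n) ^ 2
        = (1 / 2) * a n * (g n t) ^ 2 + b n * g n t + b n ^ 2 / (2 * a n) := by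
      field_simp
      ring
    have h' : (a n / 2) * (g n t + b n / a n) ^ 2 ≤ B := by
      rw [hexp]; linarith
    rw [le_div_iff₀ (ha n)]
    nlinarith [h']
  have habs : |g n t + b n / a n| ≤ Real.sqrt (2 * B / a n) := by
    have := Real.sqrt_le_sqrt hsq
    rwa [Real.sqrt_sq_eq_abs] at this
  have htri : |g n t| ≤ |g n t + b n / a n| + |b n / a n| := by
    have h := abs_add_le (g n t + b n / a n) (-(b n / a n))
    simpa using h
  rw [netG]
  have hbd : |b n / a n| = |b n| / a n := by
    rw [abs_div, abs_of_pos (ha n)]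
  linarith [habs, hbd ▸ htri]

end aux
section aux2
variable {N T : ℕ} {Y fmax : Fin N → Fin N → ℝ} {d : Fin N → Fin T → ℝ} {a b c : Fin N → ℝ}

private lemma quad_step (A G B C bb Δ g v : ℝ) (hA : 0 < A)
    (h1 : v ^ 2 ≤ Δ) (h2 : -(g * v) ≤ G * Δ) (h3 : -(bb * v) ≤ B * Δ) :
    1 / 2 * A * (g - v) ^ 2 + bb * (g - v) + C ≤
      1 / 2 * A * g ^ 2 + bb * g + C + (A / 2 + A * G + B) * Δ := by
  nlinarith [mul_le_mul_of_nonneg_left h1 hA.le, mul_le_mul_of_nonneg_left h2 hA.le, h3]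

private lemma cstar_scale (ha : ∀ n, 0 < a n) (hfmax : ∀ n m, 0 < fmax n m)
    {E₁ E₂ : ℝ} (hE₂ : 0 ≤ E₂) (hle : E₂ ≤ E₁) (hΔ : E₁ - E₂ ≤ 1) :
    netCstar N T Y fmax d a b c E₂ ≤ netCstar N T Y fmax d a b c E₁
      + netK N T d a b c * (E₁ - E₂) := by
  have hE₁ : 0 ≤ E₁ := le_trans hE₂ hle
  refine le_of_forall_pos_le_add fun ε hε => ?_
  have hε'0 : 0 < min ε 1 := lt_min hε one_pos
  have hε'1 : min ε 1 ≤ 1 := min_le_right _ _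
  suffices h : netCstar N T Y fmax d a b c E₂ ≤ netCstar N T Y fmax d a b c E₁
      + netK N T d a b c * (E₁ - E₂) + min ε 1 by
    linarith [min_le_left ε 1]
  set ε' := min ε 1 with hε'def
  rcases eq_or_lt_of_le hE₁ with hE₁0 | hE₁0
  · -- E₁ = 0, hence E₂ = 0
    have h2 : E₂ = E₁ := le_antisymm hle (hE₁0 ▸ hE₂)
    rw [h2]
    have : netCstar N T Y fmax d a b c E₁ + netK N T d a b c * (E₁ - E₁)
        = netCstar N T Y fmax d a b c E₁ := by ring
    rw [this]
    linarith
  · obtain ⟨y, hy, hylt⟩ := exists_lt_of_csInf_lt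
      (netSet_nonempty (Y := Y) (a := a) (b := b) (c := c) hfmax hE₁)
      (lt_add_of_pos_right (netCstar N T Y fmax d a b c E₁) hε'0)
    obtain ⟨g, u, θ, e, hf, rfl⟩ := hy
    obtain ⟨he0, hbal, hline, hsoc1, hsoc2, hfin, hbud⟩ := hf
    have hcostle : netCost N T a b c g ≤ netCd N T d a b c + 1 := by
      have h1 := cstar_le_Cd (T := T) (Y := Y) (fmax := fmax) (d := d) (b := b) (c := c)
        ha hfmax hE₁
      linarith
    have hg := g_bound (d := d) ha g hcostle
    have heE : ∀ n, e n ≤ E₁ := fun n =>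
      le_trans (Finset.single_le_sum (fun i _ => he0 i) (Finset.mem_univ n)) hbud
    have hu : ∀ n t, |u n t| ≤ E₁ := fun n t =>
      le_trans (abs_u_le (u n) (e n) (hsoc1 n) (hsoc2 n) t) (heE n)
    set lam := E₂ / E₁ with hlamdef
    have hlam0 : 0 ≤ lam := div_nonneg hE₂ hE₁
    have hlam1 : lam ≤ 1 := (div_le_one hE₁0).mpr hle
    have hlamE : lam * E₁ = E₂ := div_mul_cancel₀ _ (ne_of_gt hE₁0)
    set s : ℝ := 1 - lam with hsdef
    have hs0 : 0 ≤ s := by rw [hsdef]; linarith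
    have hsE : s * E₁ = E₁ - E₂ := by rw [hsdef, sub_mul, one_mul, hlamE]
    -- the perturbed point is feasible for E₂
    have hmem : netCost N T a b c (fun n t => g n t - s * u n t)
        ∈ netSet N T Y fmax d a b c E₂ := by
      refine ⟨fun n t => g n t - s * u n t, fun n t => lam * u n t, θ,
        fun n => lam * e n, ⟨?_, ?_, ?_, ?_, ?_, ?_, ?_⟩, rfl⟩
      · exact fun n => mul_nonneg hlam0 (he0 n)
      · intro n t
        have h := hbal n t
        have heq : g n t - s * u n t - lam * u n t - d n t
            = g n t - u n t - d n t := by rw [hsdef]; ring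
        rw [heq]; exact h
      · exact hline
      · intro n k
        have hsum : ∑ t ∈ Finset.Iic k, lam * u n t
            = lam * ∑ t ∈ Finset.Iic k, u n t := by rw [Finset.mul_sum]
        rw [hsum]
        have h := mul_nonneg hlam0 (hsoc1 n k)
        nlinarith [h]
      · intro n k
        have hsum : ∑ t ∈ Finset.Iic k, lam * u n t
            = lam * ∑ t ∈ Finset.Iic k, u n t := by rw [Finset.mul_sum]
        rw [hsum]
        have h := mul_le_mul_of_nonneg_left (hsoc2 n k) hlam0
        nlinarith [h]
      · intro n
        have hz : ∑ t, u n t = 0 := by linarith [hfin n]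
        have hsum : ∑ t, lam * u n t = lam * ∑ t, u n t := by rw [Finset.mul_sum]
        rw [hsum, hz, mul_zero, add_zero]
      · rw [← Finset.mul_sum, ← hlamE]
        exact mul_le_mul_of_nonneg_left hbud hlam0
    -- bound on the perturbations
    have hsu : ∀ n t, |s * u n t| ≤ E₁ - E₂ := by
      intro n t
      rw [abs_mul, abs_of_nonneg hs0, ← hsE]
      exact mul_le_mul_of_nonneg_left (hu n t) hs0
    have hΔ0 : 0 ≤ E₁ - E₂ := by linarith
    -- cost estimate
    have hcost : netCost N T a b c (fun n t => g n t - s * u n t)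
        ≤ netCost N T a b c g + netK N T d a b c * (E₁ - E₂) := by
      rw [netCost, netCost, netK, Finset.sum_mul]
      rw [← Finset.sum_add_distrib]
      refine Finset.sum_le_sum fun n _ => ?_
      rw [Finset.sum_mul, ← Finset.sum_add_distrib]
      refine Finset.sum_le_sum fun t _ => ?_
      obtain ⟨hv1, hv2⟩ := abs_le.mp (hsu n t)
      obtain ⟨hg1, hg2⟩ := abs_le.mp (hg n t)
      have hGn := netG_nonneg (N := N) (T := T) (d := d) (b := b) (c := c) ha n
      have h1 : (s * u n t) ^ 2 ≤ E₁ - E₂ := by nlinarith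
      have h2 : -(g n t * (s * u n t)) ≤ netG N T d a b c n * (E₁ - E₂) := by
        have hm : |g n t * (s * u n t)| ≤ netG N T d a b c n * (E₁ - E₂) := by
          rw [abs_mul]
          exact mul_le_mul (hg n t) (hsu n t) (abs_nonneg _) hGn
        linarith [neg_abs_le (g n t * (s * u n t))]
      have h3 : -(b n * (s * u n t)) ≤ |b n| * (E₁ - E₂) := by
        have hm : |b n * (s * u n t)| ≤ |b n| * (E₁ - E₂) := by
          rw [abs_mul]
          exact mul_le_mul_of_nonneg_left (hsu n t) (abs_nonneg _)
        linarith [neg_abs_le (b n * (s * u n t))]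
      exact quad_step (a n) (netG N T d a b c n) (|b n|) (c n) (b n) (E₁ - E₂)
        (g n t) (s * u n t) (ha n) h1 h2 h3
    have hC2 := csInf_le (netSet_bddBelow (Y := Y) (fmax := fmax) (d := d) ha E₂) hmem
    rw [netCstar]
    calc sInf (netSet N T Y fmax d a b c E₂)
        ≤ netCost N T a b c (fun n t => g n t - s * u n t) := hC2
      _ ≤ netCost N T a b c g + netK N T d a b c * (E₁ - E₂) := hcost
      _ ≤ netCstar N T Y fmax d a b c E₁ + netK N T d a b c * (E₁ - E₂) + ε' := by
          linarith

end aux2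


/-- The optimal-cost function `C*` of (P1) is continuous on `[0, ∞)`. -/
theorem net_cstar_continuousOn
    (N T : ℕ) (hN : 1 ≤ N) (hT : 1 ≤ T)
    (Y fmax : Fin N → Fin N → ℝ)
    (hYsymm : ∀ n m, Y n m = Y m n) (hYnonneg : ∀ n m, 0 ≤ Y n m)
    (hYdiag : ∀ n, Y n n = 0) (hfmax : ∀ n m, 0 < fmax n m)
    (d : Fin N → Fin T → ℝ) (a b c : Fin N → ℝ) (ha : ∀ n, 0 < a n) :
    ContinuousOn (netCstar N T Y fmax d a b c) (Set.Ici 0) := by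
  rw [Metric.continuousOn_iff]
  intro x hx ε hε
  set K := netK N T d a b c with hKdef
  have hK0 : 0 ≤ K := netK_nonneg (N := N) (T := T) (d := d) (b := b) (c := c) ha
  have hK1 : (0:ℝ) < K + 1 := by linarith
  refine ⟨min 1 (ε / (K + 1)), lt_min one_pos (div_pos hε hK1), fun y hy hdist => ?_⟩
  have hx0 : (0:ℝ) ≤ x := hx
  have hy0 : (0:ℝ) ≤ y := hy
  rw [Real.dist_eq] at hdist ⊢
  have h1 : |y - x| < 1 := lt_of_lt_of_le hdist (min_le_left _ _)
  have h2 : |y - x| < ε / (K + 1) := lt_of_lt_of_le hdist (min_le_right _ _)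
  have hKlt : K * |y - x| < ε := by
    have ha1 : K * |y - x| ≤ K * (ε / (K + 1)) := mul_le_mul_of_nonneg_left h2.le hK0
    have ha2 : K * (ε / (K + 1)) < ε := by
      rw [mul_div_assoc'] at *
      rw [div_lt_iff₀ hK1]
      nlinarith
    linarith
  rcases le_total x y with hxy | hxy
  · have habs : |y - x| = y - x := abs_of_nonneg (by linarith)
    have hb1 := cstar_antitone (Y := Y) (fmax := fmax) (d := d) (a := a) (b := b) (c := c)
      ha hfmax hx0 hxy
    have hb2 := cstar_scale (Y := Y) (fmax := fmax) (d := d) (a := a) (b := b) (c := c)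
      ha hfmax hx0 hxy (by rw [habs] at h1; linarith)
    rw [abs_lt]
    rw [habs] at hKlt
    constructor <;> nlinarith
  · have habs : |y - x| = x - y := by rw [abs_sub_comm]; exact abs_of_nonneg (by linarith)
    have hb1 := cstar_antitone (Y := Y) (fmax := fmax) (d := d) (a := a) (b := b) (c := c)
      ha hfmax hy0 hxy
    have hb2 := cstar_scale (Y := Y) (fmax := fmax) (d := d) (a := a) (b := b) (c := c)
      ha hfmax hy0 hxy (by rw [habs] at h1; linarith)
    rw [abs_lt]
    rw [habs] at hKlt
    constructor <;> nlinarith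
end

section
/- If (g, u, θ, e) is feasible for the network model (P1) at some capacity E ≥ 0, then the time averages ḡ_n = (1/T)·Σ_{t=1}^T g_{n,t} and θ̄_n = (1/T)·Σ_{t=1}^T θ_{n,t} form a feasible point for the single-period problem (P3): ḡ_n − d̄_n = Σ_m Y_{nm}(θ̄_n − θ̄_m) for all n, and Y_{nm}(θ̄_n − θ̄_m) ≤ f^max_{nm} for all n, m. -/
open Finset Filter

/-- Feasibility for the single-period problem (P3): balance with the
time-averaged demands `d̄ n = (1/T)·∑ t, d n t` and line limits. -/
def p3Feasible (N T : ℕ) (Y fmax : Fin N → Fin N → ℝ) (d : Fin N → Fin T → ℝ)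
    (g θ : Fin N → ℝ) : Prop :=
  (∀ n, g n - (∑ t, d n t) / (T : ℝ) = ∑ m, Y n m * (θ n - θ m)) ∧
  (∀ n m, Y n m * (θ n - θ m) ≤ fmax n m)

/-- Optimal value `V(P3)` of the single-period problem (P3). -/
noncomputable def p3Value (N T : ℕ) (Y fmax : Fin N → Fin N → ℝ)
    (d : Fin N → Fin T → ℝ) (a b c : Fin N → ℝ) : ℝ :=
  sInf {y : ℝ | ∃ g θ : Fin N → ℝ, p3Feasible N T Y fmax d g θ ∧
    y = ∑ n, ((1 / 2) * a n * (g n) ^ 2 + b n * g n + c n)}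

/-- If `(g, u, θ, e)` is feasible for (P1) at some capacity
`E ≥ 0`, then the time averages `ḡ n = (1/T)·∑ t, g n t` and
`θ̄ n = (1/T)·∑ t, θ n t` form a feasible point for the single-period
problem (P3). -/
theorem net_time_average_feasible_for_p3
    (N T : ℕ) (hN : 1 ≤ N) (hT : 1 ≤ T)
    (Y fmax : Fin N → Fin N → ℝ)
    (hYsymm : ∀ n m, Y n m = Y m n) (hYnonneg : ∀ n m, 0 ≤ Y n m)
    (hYdiag : ∀ n, Y n n = 0) (hfmax : ∀ n m, 0 < fmax n m)
    (d : Fin N → Fin T → ℝ) (a b c : Fin N → ℝ) (ha : ∀ n, 0 < a n)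
    (E : ℝ) (hE : 0 ≤ E)
    (g u θ : Fin N → Fin T → ℝ) (e : Fin N → ℝ)
    (hfeas : netFeasible N T Y fmax d E g u θ e) :
    p3Feasible N T Y fmax d
      (fun n => (∑ t, g n t) / (T : ℝ))
      (fun n => (∑ t, θ n t) / (T : ℝ)) := by
  obtain ⟨he, hbal, hline, _, _, husum, _⟩ := hfeas
  have hT0 : (0:ℝ) < (T:ℝ) := by exact_mod_cast Nat.lt_of_lt_of_le Nat.zero_lt_one hT
  have hu : ∀ n, ∑ t, u n t = 0 := fun n => by linarith [husum n]
  constructor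
  · intro n
    have hsum : ∑ t, (g n t - u n t - d n t) = ∑ t, ∑ m, Y n m * (θ n t - θ m t) := by
      exact Finset.sum_congr rfl fun t _ => hbal n t
    rw [Finset.sum_comm] at hsum
    simp only [Finset.sum_sub_distrib, hu n, sub_zero] at hsum
    have : (∑ t, g n t) / (T:ℝ) - (∑ t, d n t) / (T:ℝ)
        = ∑ m, (∑ t, Y n m * (θ n t - θ m t)) / (T:ℝ) := by
      rw [div_sub_div_same, hsum, Finset.sum_div]
    rw [this]
    refine Finset.sum_congr rfl fun m _ => ?_
    simp only [mul_sub, Finset.sum_sub_distrib, ← Finset.mul_sum]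
    field_simp
  · intro n m
    have h1 : Y n m * ((∑ t, θ n t) / (T:ℝ) - (∑ t, θ m t) / (T:ℝ))
        = (∑ t, Y n m * (θ n t - θ m t)) / (T:ℝ) := by
      simp only [mul_sub, Finset.sum_sub_distrib, ← Finset.mul_sum]
      field_simp
    rw [h1, div_le_iff₀ hT0]
    calc ∑ t, Y n m * (θ n t - θ m t) ≤ ∑ _t : Fin T, fmax n m :=
          Finset.sum_le_sum fun t _ => hline n m t
      _ = fmax n m * (T:ℝ) := by simp [mul_comm]
end

section
/- In the network model (P1), for every capacity E ≥ 0 one has C*(E) ≥ T·V(P3), where V(P3) is the optimal value of the single-period problem (P3). -/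
open Finset Filter

/-- In the network model (P1), for every capacity `E ≥ 0` one has
`C*(E) ≥ T·V(P3)`, where `V(P3)` is the optimal value of the single-period
problem (P3). -/
theorem net_cstar_ge_T_mul_p3Value
    (N T : ℕ) (hN : 1 ≤ N) (hT : 1 ≤ T)
    (Y fmax : Fin N → Fin N → ℝ)
    (hYsymm : ∀ n m, Y n m = Y m n) (hYnonneg : ∀ n m, 0 ≤ Y n m)
    (hYdiag : ∀ n, Y n n = 0) (hfmax : ∀ n m, 0 < fmax n m)
    (d : Fin N → Fin T → ℝ) (a b c : Fin N → ℝ) (ha : ∀ n, 0 < a n) :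
    ∀ E : ℝ, 0 ≤ E →
      (T : ℝ) * p3Value N T Y fmax d a b c ≤ netCstar N T Y fmax d a b c E := by
  intro E hE
  have hTpos : (0:ℝ) < (T:ℝ) := by exact_mod_cast hT
  -- lower bound for the P3 set
  have hbdd : BddBelow {y : ℝ | ∃ g θ : Fin N → ℝ, p3Feasible N T Y fmax d g θ ∧
      y = ∑ n, ((1 / 2) * a n * (g n) ^ 2 + b n * g n + c n)} := by
    refine ⟨∑ n, (c n - (b n)^2 / (2 * a n)), ?_⟩
    rintro y ⟨g, θ, _, rfl⟩
    apply Finset.sum_le_sum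
    intro n _
    have han := ha n
    have h1 : 0 ≤ (a n * g n + b n)^2 := sq_nonneg _
    have hq : b n ^ 2 / (2 * a n) * (2 * a n) = b n ^ 2 :=
      div_mul_cancel₀ _ (by positivity)
    nlinarith [h1, han, hq]
  apply le_csInf
  · -- network problem nonempty: g = d, u = 0, θ = 0, e = 0
    exact ⟨netCost N T a b c d, d, 0, 0, 0,
      ⟨fun n => le_refl 0,
       fun n t => by simp,
       fun n m t => by simpa using (hfmax n m).le,
       fun n k => by simp,
       fun n k => by simp,
       fun n => by simp,
       by simpa using hE⟩, rfl⟩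
  · rintro y ⟨g, u, θ, e, ⟨he0, hbal, hline, _, _, hcyc, _⟩, rfl⟩
    set gb : Fin N → ℝ := fun n => (∑ t, g n t) / T with hgb
    set θb : Fin N → ℝ := fun n => (∑ t, θ n t) / T with hθb
    have hsumu : ∀ n, ∑ t, u n t = 0 := by
      intro n; have := hcyc n; linarith
    have hfeas : p3Feasible N T Y fmax d gb θb := by
      constructor
      · intro n
        have key : ∑ t, (g n t - u n t - d n t) = ∑ t, ∑ m, Y n m * (θ n t - θ m t) :=
          Finset.sum_congr rfl fun t _ => hbal n t
        rw [Finset.sum_comm] at key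
        simp only [Finset.sum_sub_distrib, hsumu n, sub_zero] at key
        have : gb n - (∑ t, d n t) / T = (∑ t, g n t - ∑ t, d n t) / T := by
          rw [hgb]; ring
        rw [this, key]
        rw [Finset.sum_div]
        apply Finset.sum_congr rfl
        intro m _
        have : ∑ t, Y n m * (θ n t - θ m t) = Y n m * (∑ t, θ n t - ∑ t, θ m t) := by
          simp only [mul_sub, Finset.mul_sum, Finset.sum_sub_distrib]
        rw [this, hθb]
        simp only
        field_simp
      · intro n m
        have h1 : Y n m * (θb n - θb m) = (∑ t, Y n m * (θ n t - θ m t)) / T := by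
          have h0 : ∑ t, Y n m * (θ n t - θ m t) = Y n m * (∑ t, θ n t - ∑ t, θ m t) := by
            simp only [mul_sub, Finset.mul_sum, Finset.sum_sub_distrib]
          rw [hθb, h0]
          simp only
          field_simp
        rw [h1, div_le_iff₀ hTpos]
        calc ∑ t, Y n m * (θ n t - θ m t) ≤ ∑ _t : Fin T, fmax n m :=
              Finset.sum_le_sum fun t _ => hline n m t
          _ = fmax n m * T := by simp [mul_comm]
    have hVle : p3Value N T Y fmax d a b c ≤
        ∑ n, ((1 / 2) * a n * (gb n) ^ 2 + b n * gb n + c n) :=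
      csInf_le hbdd ⟨gb, θb, hfeas, rfl⟩
    have hconv : (T:ℝ) * ∑ n, ((1 / 2) * a n * (gb n) ^ 2 + b n * gb n + c n) ≤
        netCost N T a b c g := by
      rw [netCost, Finset.mul_sum]
      apply Finset.sum_le_sum
      intro n _
      have hcs : (∑ t, g n t) ^ 2 ≤ (T:ℝ) * ∑ t, (g n t)^2 := by
        have := sq_sum_le_card_mul_sum_sq (s := (Finset.univ : Finset (Fin T)))
          (f := fun t => g n t)
        simpa using this
      have hexp : ∑ t, ((1 / 2) * a n * (g n t) ^ 2 + b n * g n t + c n) =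
          (1/2) * a n * (∑ t, (g n t)^2) + b n * (∑ t, g n t) + T * c n := by
        rw [Finset.sum_add_distrib, Finset.sum_add_distrib, ← Finset.mul_sum,
          ← Finset.mul_sum]
        simp [mul_comm]
      rw [hexp, hgb]
      simp only
      have han := (ha n).le
      have h3 : (∑ t, g n t)^2 / T ≤ ∑ t, (g n t)^2 := by
        rw [div_le_iff₀ hTpos]; linarith [hcs]
      have heq : (T:ℝ) * ((1/2) * a n * ((∑ t, g n t) / T)^2 + b n * ((∑ t, g n t) / T) + c n)
          = (1/2) * a n * ((∑ t, g n t)^2 / T) + b n * (∑ t, g n t) + T * c n := by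
        field_simp
      rw [heq]
      have := mul_le_mul_of_nonneg_left h3 (by linarith : (0:ℝ) ≤ (1/2) * a n)
      linarith
    calc (T:ℝ) * p3Value N T Y fmax d a b c
        ≤ (T:ℝ) * ∑ n, ((1 / 2) * a n * (gb n) ^ 2 + b n * gb n + c n) :=
          mul_le_mul_of_nonneg_left hVle hTpos.le
      _ ≤ netCost N T a b c g := hconv
end

section
/- Let (ĝ, θ̂) be feasible for the single-period problem (P3). Define û_{n,t} = d̄_n − d_{n,t} and ê_n = 2·max_{1 ≤ k ≤ T} |Σ_{t=1}^k (d̄_n − d_{n,t})|. Then for every E ≥ Σ_{n=1}^N ê_n, the point given by g_{n,t} = ĝ_n, u_{n,t} = û_{n,t}, θ_{n,t} = θ̂_n, and e_n = ê_n is feasible for the network model (P1) at capacity E, and its cost equals T·Σ_{n=1}^N C_n(ĝ_n). -/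
open Finset Filter

/-- Let `(ĝ, θ̂)` be feasible for (P3). With
`û n t = d̄ n − d n t` and `ê n = 2·max_k |∑_{t ≤ k} (d̄ n − d n t)|`, for every
`E ≥ ∑ n, ê n` the constant-in-time point `g n t = ĝ n`, `u = û`,
`θ n t = θ̂ n`, `e = ê` is feasible for (P1) at capacity `E`, and its cost
equals `T·∑ n, C_n(ĝ n)`. -/
theorem p3_point_lifts_to_p1
    (N T : ℕ) (hN : 1 ≤ N) (hT : 1 ≤ T)
    (Y fmax : Fin N → Fin N → ℝ)
    (hYsymm : ∀ n m, Y n m = Y m n) (hYnonneg : ∀ n m, 0 ≤ Y n m)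
    (hYdiag : ∀ n, Y n n = 0) (hfmax : ∀ n m, 0 < fmax n m)
    (d : Fin N → Fin T → ℝ) (a b c : Fin N → ℝ) (ha : ∀ n, 0 < a n)
    (ghat θhat : Fin N → ℝ)
    (hfeas : p3Feasible N T Y fmax d ghat θhat) :
    ∀ E : ℝ,
      (∑ n, 2 * Finset.univ.sup' ⟨⟨0, hT⟩, Finset.mem_univ _⟩
          (fun k : Fin T =>
            |∑ t ∈ Finset.Iic k, ((∑ s, d n s) / (T : ℝ) - d n t)|)) ≤ E →
      netFeasible N T Y fmax d E
        (fun n _ => ghat n)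
        (fun n t => (∑ s, d n s) / (T : ℝ) - d n t)
        (fun n _ => θhat n)
        (fun n => 2 * Finset.univ.sup' ⟨⟨0, hT⟩, Finset.mem_univ _⟩
          (fun k : Fin T =>
            |∑ t ∈ Finset.Iic k, ((∑ s, d n s) / (T : ℝ) - d n t)|)) ∧
      netCost N T a b c (fun n _ => ghat n)
        = (T : ℝ) * ∑ n, ((1 / 2) * a n * (ghat n) ^ 2 + b n * ghat n + c n) := by

  intro E hE
  obtain ⟨hbal, hlim⟩ := hfeas
  set M : Fin N → ℝ := fun n => Finset.univ.sup' ⟨⟨0, hT⟩, Finset.mem_univ _⟩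
      (fun k : Fin T => |∑ t ∈ Finset.Iic k, ((∑ s, d n s) / (T : ℝ) - d n t)|) with hM
  have hMle : ∀ n (k : Fin T),
      |∑ t ∈ Finset.Iic k, ((∑ s, d n s) / (T : ℝ) - d n t)| ≤ M n := by
    intro n k
    exact Finset.le_sup' (fun k : Fin T => |∑ t ∈ Finset.Iic k, ((∑ s, d n s) / (T : ℝ) - d n t)|) (Finset.mem_univ k)
  have hM0 : ∀ n, 0 ≤ M n := by
    intro n
    exact le_trans (abs_nonneg (∑ t ∈ Finset.Iic (⟨0, hT⟩ : Fin T),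
      ((∑ s, d n s) / (T : ℝ) - d n t))) (hMle n ⟨0, hT⟩)
  have hsum0 : ∀ n, (∑ t, ((∑ s, d n s) / (T : ℝ) - d n t)) = 0 := by
    intro n
    have hT0 : (T : ℝ) ≠ 0 := by positivity
    rw [Finset.sum_sub_distrib, Finset.sum_const, Finset.card_univ, Fintype.card_fin,
      nsmul_eq_mul, mul_div_cancel₀ _ hT0, sub_self]
  refine ⟨⟨?_, ?_, ?_, ?_, ?_, ?_, ?_⟩, ?_⟩
  · intro n; have := hM0 n; linarith
  · intro n t
    have h := hbal n
    simp only []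
    linarith
  · intro n m t; exact hlim n m
  · intro n k
    have h := hMle n k
    have := abs_le.mp h
    linarith [this.1]
  · intro n k
    have h := hMle n k
    have := abs_le.mp h
    linarith [this.2]
  · intro n; rw [hsum0 n, add_zero]
  · exact hE
  · unfold netCost
    simp only [Finset.sum_const, Finset.card_univ, Fintype.card_fin, nsmul_eq_mul]
    rw [Finset.mul_sum]
end

section
/- In the network model (P1), assume the single-period problem (P3) is feasible. Then for every E ≥ Σ_{n=1}^N 2·max_{1 ≤ k ≤ T} |Σ_{t=1}^k (d̄_n − d_{n,t})|, one has C*(E) = T·V(P3), where V(P3) is the optimal value of (P3). In particular, C*(E) is eventually constant and equal to T·V(P3) as E grows. -/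
open Finset Filter

/-! Storage lets every bus dispatch at its time average. With storage action
`u n t = d̄ n - d n t`, a constant dispatch built from a (P3) point is feasible for (P1) as soon as
`e n` is twice the largest cumulative deviation, and it costs `T` times the (P3) cost.
Conversely, storage is lossless and returns to its initial charge, so time-averaging a (P1) point
gives a (P3) point, and Jensen's inequality for the convex costs shows that `T` times its cost is
at most the (P1) cost. -/

noncomputable def quadCost (a b c x : ℝ) : ℝ := 1 / 2 * a * x ^ 2 + b * x + c

lemma convexOn_quadCost {a : ℝ} (ha : 0 ≤ a) (b c : ℝ) : ConvexOn ℝ Set.univ (quadCost a b c) :=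
  (((even_two.convexOn_pow).smul (by positivity : (0 : ℝ) ≤ 1 / 2 * a)).add
    ((LinearMap.mulLeft ℝ b).convexOn convex_univ)).add_const c |>.congr fun x _ => by
      simp [quadCost]

lemma card_mul_quadCost_average_le {ι : Type*} {s : Finset ι} (hs : s.Nonempty) {a : ℝ}
    (ha : 0 ≤ a) (b c : ℝ) (x : ι → ℝ) :
    #s * quadCost a b c ((∑ i ∈ s, x i) / #s) ≤ ∑ i ∈ s, quadCost a b c (x i) := by
  have hs0 : (0 : ℝ) < #s := by exact_mod_cast hs.card_pos
  have jensen := (convexOn_quadCost ha b c).map_sum_le (t := s) (w := fun _ => (#s : ℝ)⁻¹)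
    (p := x) (fun _ _ => by positivity) (by simp [hs0.ne']) (fun _ _ => Set.mem_univ _)
  simp only [smul_eq_mul, ← mul_sum] at jensen
  rw [div_eq_inv_mul]
  calc _ ≤ (#s : ℝ) * ((#s : ℝ)⁻¹ * ∑ i ∈ s, quadCost a b c (x i)) := by gcongr
    _ = _ := by field_simp

lemma sInf_eq_mul_sInf_of_forall_exists_le {A B : Set ℝ} {r : ℝ} (hr : 0 ≤ r)
    (hA : ∀ x ∈ A, ∃ y ∈ B, r * y ≤ x) (hB : ∀ y ∈ B, r * y ∈ A) :
    sInf A = r * sInf B := by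
  rw [← smul_eq_mul, ← Real.sInf_smul_of_nonneg hr]
  refine csInf_eq_csInf_of_forall_exists_le (fun x hx => ?_) ?_
  · obtain ⟨y, hy, hyx⟩ := hA x hx
    exact ⟨r * y, Set.smul_mem_smul_set hy, hyx⟩
  · rintro _ ⟨y, hy, rfl⟩
    exact ⟨r * y, hB y hy, le_rfl⟩

section Network

variable {N T : ℕ} {Y fmax : Fin N → Fin N → ℝ} {d : Fin N → Fin T → ℝ}

lemma netCost_eq_sum_quadCost (a b c : Fin N → ℝ) (g : Fin N → Fin T → ℝ) :
    netCost N T a b c g = ∑ n, ∑ t, quadCost (a n) (b n) (c n) (g n t) := rfl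

lemma p3Feasible_timeAverage (hT : 0 < T) {E : ℝ} {g u θ : Fin N → Fin T → ℝ} {e : Fin N → ℝ}
    (h : netFeasible N T Y fmax d E g u θ e) :
    p3Feasible N T Y fmax d (fun n => (∑ t, g n t) / T) (fun n => (∑ t, θ n t) / T) := by
  obtain ⟨-, hbal, hline, -, -, hcyc, -⟩ := h
  have hT0 : (0 : ℝ) < T := by exact_mod_cast hT
  have hflow : ∀ n m, Y n m * ((∑ t, θ n t) / T - (∑ t, θ m t) / T) =
      (∑ t, Y n m * (θ n t - θ m t)) / T := fun n m => by
    rw [← mul_sum, sum_sub_distrib]; ring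
  refine ⟨fun n => ?_, fun n m => ?_⟩
  · have hu : ∑ t, u n t = 0 := by linarith [hcyc n]
    simp only [hflow, ← sum_div]
    rw [sum_comm, ← sum_congr rfl fun t _ => hbal n t, sum_sub_distrib,
      sum_sub_distrib, hu]
    ring
  · rw [hflow, div_le_iff₀ hT0]
    calc ∑ t, Y n m * (θ n t - θ m t) ≤ ∑ _t : Fin T, fmax n m :=
          sum_le_sum fun t _ => hline n m t
      _ = fmax n m * T := by simp [mul_comm]

lemma mul_sum_quadCost_timeAverage_le_netCost (hT : 0 < T) {a : Fin N → ℝ} (ha : ∀ n, 0 ≤ a n)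
    (b c : Fin N → ℝ) (g : Fin N → Fin T → ℝ) :
    T * ∑ n, quadCost (a n) (b n) (c n) ((∑ t, g n t) / T) ≤ netCost N T a b c g := by
  have hT' : (univ : Finset (Fin T)).Nonempty := univ_nonempty_iff.2 ⟨⟨0, hT⟩⟩
  rw [mul_sum, netCost_eq_sum_quadCost]
  gcongr with n
  simpa using card_mul_quadCost_average_le hT' (ha n) (b n) (c n) (g n)

lemma netFeasible_of_p3Feasible (hT : 0 < T) {g θ : Fin N → ℝ}
    (h : p3Feasible N T Y fmax d g θ) {M : Fin N → ℝ}
    (hM : ∀ n k, |∑ t ∈ Iic k, ((∑ s, d n s) / T - d n t)| ≤ M n) {E : ℝ}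
    (hE : ∑ n, 2 * M n ≤ E) :
    netFeasible N T Y fmax d E (fun n _ => g n) (fun n t => (∑ s, d n s) / T - d n t)
      (fun n _ => θ n) (fun n => 2 * M n) := by
  obtain ⟨hbal, hline⟩ := h
  have hT0 : (T : ℝ) ≠ 0 := by positivity
  refine ⟨fun n => ?_, fun n t => ?_, fun n m _ => hline n m, fun n k => ?_, fun n k => ?_,
    fun n => ?_, hE⟩
  · linarith [(abs_nonneg _).trans (hM n ⟨0, hT⟩)]
  · rw [← hbal n]; ring
  · linarith [neg_abs_le (∑ t ∈ Iic k, ((∑ s, d n s) / T - d n t)), hM n k]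
  · linarith [le_abs_self (∑ t ∈ Iic k, ((∑ s, d n s) / T - d n t)), hM n k]
  · simp [sum_sub_distrib, mul_div_cancel₀ _ hT0]

lemma netCost_const (a b c : Fin N → ℝ) (g : Fin N → ℝ) :
    netCost N T a b c (fun n _ => g n) = T * ∑ n, quadCost (a n) (b n) (c n) (g n) := by
  simp [netCost_eq_sum_quadCost, mul_sum]

end Network

theorem net_cstar_eventually_T_mul_p3Value_general
    (N T : ℕ) (hT : 1 ≤ T)
    (Y fmax : Fin N → Fin N → ℝ)
    (d : Fin N → Fin T → ℝ) (a b c : Fin N → ℝ) (ha : ∀ n, 0 < a n) :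
    ∀ E : ℝ,
      (∑ n, 2 * Finset.univ.sup' ⟨⟨0, hT⟩, Finset.mem_univ _⟩
          (fun k : Fin T =>
            |∑ t ∈ Finset.Iic k, ((∑ s, d n s) / (T : ℝ) - d n t)|)) ≤ E →
      netCstar N T Y fmax d a b c E = (T : ℝ) * p3Value N T Y fmax d a b c := by
  intro E hE
  refine sInf_eq_mul_sInf_of_forall_exists_le T.cast_nonneg ?_ ?_
  · rintro _ ⟨g, u, θ, e, hfeas, rfl⟩
    exact ⟨_, ⟨_, _, p3Feasible_timeAverage hT hfeas, rfl⟩,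
      mul_sum_quadCost_timeAverage_le_netCost hT (fun n => (ha n).le) b c g⟩
  · rintro _ ⟨g, θ, hfeas, rfl⟩
    exact ⟨_, _, _, _, netFeasible_of_p3Feasible hT hfeas
      (fun n k => by apply le_sup' _ (mem_univ k)) hE, (netCost_const a b c g).symm⟩

/-- Assume the single-period problem (P3) is feasible. Then for
every `E ≥ ∑ n, 2·max_k |∑_{t ≤ k} (d̄ n − d n t)|`, one has
`C*(E) = T·V(P3)`; in particular `C*` is eventually constant, equal to
`T·V(P3)`. -/
theorem net_cstar_eventually_T_mul_p3Value
    (N T : ℕ) (hN : 1 ≤ N) (hT : 1 ≤ T)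
    (Y fmax : Fin N → Fin N → ℝ)
    (hYsymm : ∀ n m, Y n m = Y m n) (hYnonneg : ∀ n m, 0 ≤ Y n m)
    (hYdiag : ∀ n, Y n n = 0) (hfmax : ∀ n m, 0 < fmax n m)
    (d : Fin N → Fin T → ℝ) (a b c : Fin N → ℝ) (ha : ∀ n, 0 < a n)
    (hp3 : ∃ g θ : Fin N → ℝ, p3Feasible N T Y fmax d g θ) :
    ∀ E : ℝ,
      (∑ n, 2 * Finset.univ.sup' ⟨⟨0, hT⟩, Finset.mem_univ _⟩
          (fun k : Fin T =>
            |∑ t ∈ Finset.Iic k, ((∑ s, d n s) / (T : ℝ) - d n t)|)) ≤ E →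
      netCstar N T Y fmax d a b c E = (T : ℝ) * p3Value N T Y fmax d a b c :=
  net_cstar_eventually_T_mul_p3Value_general N T hT Y fmax d a b c ha
end
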